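/- Let n ≥ 2, let A be a real n×n singular irreducible M-matrix, and let L_G and U_G be the FSAI factors associated with admissible patterns S_L and S_U. Then every diagonal entry of L_G A U_G is strictly positive. -/

import Mathlib

open Matrix

/-- The spectral radius of a real matrix: the maximum modulus of its complex
eigenvalues (supremum of moduli of elements of the complex spectrum). -/
noncomputable def specRad {n : ℕ} (B : Matrix (Fin n) (Fin n) ℝ) : ℝ :=
  sSup ((fun z : ℂ => ‖z‖) '' spectrum ℂ (B.map Complex.ofReal))

/-- A real square matrix is a Z-matrix if its off-diagonal entries are nonpositive. -/
def IsZMatrix {n : ℕ} (A : Matrix (Fin n) (Fin n) ℝ) : Prop :=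
  ∀ i j, i ≠ j → A i j ≤ 0

/-- A Z-matrix `A` is a nonsingular M-matrix if `A = s • 1 - B` with `B`
entrywise nonnegative and `s > ρ(B)`. -/
def IsNonsingularMMatrix {n : ℕ} (A : Matrix (Fin n) (Fin n) ℝ) : Prop :=
  IsZMatrix A ∧ ∃ (s : ℝ) (B : Matrix (Fin n) (Fin n) ℝ),
    (∀ i j, 0 ≤ B i j) ∧ specRad B < s ∧ A = s • (1 : Matrix (Fin n) (Fin n) ℝ) - B

/-- A Z-matrix `A` is a singular M-matrix if `A = ρ(B) • 1 - B` with `B`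
entrywise nonnegative. -/
def IsSingularMMatrix {n : ℕ} (A : Matrix (Fin n) (Fin n) ℝ) : Prop :=
  IsZMatrix A ∧ ∃ B : Matrix (Fin n) (Fin n) ℝ,
    (∀ i j, 0 ≤ B i j) ∧ A = specRad B • (1 : Matrix (Fin n) (Fin n) ℝ) - B

/-- A matrix is irreducible if its directed graph (edge `i → j` iff `A i j ≠ 0`)
is strongly connected. -/
def IsIrreducibleMatrix {n : ℕ} (A : Matrix (Fin n) (Fin n) ℝ) : Prop :=
  ∀ i j : Fin n, Relation.ReflTransGen (fun a b : Fin n => A a b ≠ 0) i j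

/-- Lower triangular real matrix. -/
def IsLowerTri {n : ℕ} (L : Matrix (Fin n) (Fin n) ℝ) : Prop :=
  ∀ i j : Fin n, i < j → L i j = 0

/-- Upper triangular real matrix. -/
def IsUpperTri {n : ℕ} (U : Matrix (Fin n) (Fin n) ℝ) : Prop :=
  ∀ i j : Fin n, j < i → U i j = 0

/-- `L` is an FSAI lower triangular factor of `A` for the pattern `S`:
`L` is lower triangular, vanishes off the pattern, and `(L * A) i j = δ i j`
on the pattern. -/
def IsFSAILowerFactor {n : ℕ} (A L : Matrix (Fin n) (Fin n) ℝ)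
    (S : Set (Fin n × Fin n)) : Prop :=
  IsLowerTri L ∧ (∀ p : Fin n × Fin n, p ∉ S → L p.1 p.2 = 0) ∧
    ∀ p : Fin n × Fin n, p ∈ S → (L * A) p.1 p.2 = if p.1 = p.2 then 1 else 0

/-- `U` is an FSAI upper triangular factor of `A` for the pattern `S`:
`U` is upper triangular, vanishes off the pattern, and `(A * U) i j = δ i j`
on the pattern. -/
def IsFSAIUpperFactor {n : ℕ} (A U : Matrix (Fin n) (Fin n) ℝ)
    (S : Set (Fin n × Fin n)) : Prop :=
  IsUpperTri U ∧ (∀ p : Fin n × Fin n, p ∉ S → U p.1 p.2 = 0) ∧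
    ∀ p : Fin n × Fin n, p ∈ S → (A * U) p.1 p.2 = if p.1 = p.2 then 1 else 0


/-!
Write `A = ρ(B) • 1 - B` with `B ≥ 0` irreducible, and let `w > 0` be a Perron vector of
`B`. If `S` misses some index, then `ρ(B) • 1 - B_S` (with `B_S` the principal block of `B`
on `S`) is monotone: `M v ≥ 0` forces `v ≥ 0`, by comparing `v` with a multiple of `w` and
propagating along the graph of `B`. Its inverse is therefore nonnegative with a positive
diagonal. Row `i` of `L` and column `i` of `U` are the `i`-th row and column of these
inverses for the row pattern `P` of `S_L` and the column pattern `Q` of `S_U`; admissibility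
keeps some index outside `P ∪ Q`. With `M = ρ(B) • 1 - B_{P ∪ Q}` and `K = M⁻¹`, we have
`(L A U) i i = x ⬝ M y` for `x = L i`, `y = Uᵀ i`, and `x M`, `M y` are nonpositive off `i`.
The path-product inequality `K l i * K i k ≤ K i i * K l k`, read off from the inverse for
`(P ∪ Q) \ {i}`, then gives `x i * y i ≤ K i i * (L A U) i i`, while `x i, y i > 0`.
-/

open Filter Topology

variable {n : ℕ}

lemma specRad_nonneg (B : Matrix (Fin n) (Fin n) ℝ) : 0 ≤ specRad B :=
  Real.sSup_nonneg (by rintro _ ⟨z, -, rfl⟩; positivity)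

lemma norm_le_specRad (B : Matrix (Fin n) (Fin n) ℝ) {z : ℂ}
    (hz : z ∈ spectrum ℂ (B.map Complex.ofReal)) : ‖z‖ ≤ specRad B :=
  le_csSup ((Matrix.finite_spectrum _).image _).bddAbove ⟨z, hz, rfl⟩

lemma exists_norm_eq_specRad [NeZero n] (B : Matrix (Fin n) (Fin n) ℝ) :
    ∃ z ∈ spectrum ℂ (B.map Complex.ofReal), ‖z‖ = specRad B :=
  ((spectrum.nonempty_of_isAlgClosed_of_finiteDimensional ℂ _).image _).csSup_mem
    ((Matrix.finite_spectrum _).image _)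

lemma exists_mulVec_eq_smul_of_mem_spectrum {M : Matrix (Fin n) (Fin n) ℂ} {z : ℂ}
    (hz : z ∈ spectrum ℂ M) : ∃ v ≠ 0, M *ᵥ v = z • v := by
  rw [← Matrix.spectrum_toLin', ← Module.End.hasEigenvalue_iff_mem_spectrum] at hz
  obtain ⟨v, hv⟩ := hz.exists_hasEigenvector
  exact ⟨v, hv.2, by simpa using hv.apply_eq_smul⟩

lemma ofReal_le_spectralRadius_of_pow_le_norm {A : Type*} [NormedRing A]
    [NormedAlgebra ℂ A] [CompleteSpace A] {a : A} {θ : ℝ} (hθ : 0 ≤ θ)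
    (h : ∀ k : ℕ, θ ^ k ≤ ‖a ^ k‖) :
    ENNReal.ofReal θ ≤ spectralRadius ℂ a := by
  refine ge_of_tendsto (spectrum.pow_norm_pow_one_div_tendsto_nhds_spectralRadius a) ?_
  filter_upwards [eventually_ne_atTop 0] with k hk
  refine ENNReal.ofReal_le_ofReal ?_
  calc θ = (θ ^ k) ^ (1 / k : ℝ) := by rw [one_div, Real.pow_rpow_inv_natCast hθ hk]
    _ ≤ ‖a ^ k‖ ^ (1 / k : ℝ) := by gcongr; exact h k

section
attribute [local instance] Matrix.linftyOpNormedRing Matrix.linftyOpNormedAlgebra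

lemma le_specRad_of_pow_le_sum {B : Matrix (Fin n) (Fin n) ℝ} {θ : ℝ} (hθ : 0 ≤ θ)
    (h : ∀ k : ℕ, ∃ i, θ ^ k ≤ ∑ j, (B ^ k) i j) : θ ≤ specRad B := by
  have : CompleteSpace (Matrix (Fin n) (Fin n) ℂ) := FiniteDimensional.complete ℂ _
  have hnorm : ∀ k : ℕ, θ ^ k ≤ ‖B.map Complex.ofReal ^ k‖ := fun k => by
    obtain ⟨i, hi⟩ := h k
    set C := (B ^ k).map Complex.ofReal
    have hrow : ∑ j, ‖C i j‖₊ ≤ ‖C‖₊ := by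
      rw [Matrix.linfty_opNNNorm_def]
      exact Finset.le_sup (f := fun i => ∑ j, ‖C i j‖₊) (Finset.mem_univ i)
    calc θ ^ k ≤ ∑ j, |(B ^ k) i j| := hi.trans (Finset.sum_le_sum fun j _ => le_abs_self _)
      _ ≤ ‖C‖ := by simpa [C, ← NNReal.coe_le_coe, Complex.norm_real] using hrow
      _ = ‖B.map Complex.ofReal ^ k‖ := congrArg norm (Matrix.map_pow B Complex.ofRealHom k)
  have hsr : spectralRadius ℂ (B.map Complex.ofReal) ≤ ENNReal.ofReal (specRad B) :=
    iSup₂_le fun z hz => by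
      rw [← ENNReal.ofReal_coe_nnreal, coe_nnnorm]
      exact ENNReal.ofReal_le_ofReal (norm_le_specRad B hz)
  exact (ENNReal.ofReal_le_ofReal_iff (specRad_nonneg B)).1
    ((ofReal_le_spectralRadius_of_pow_le_norm hθ hnorm).trans hsr)

end

lemma mulVec_mono_of_nonneg {M : Matrix (Fin n) (Fin n) ℝ} (hM : ∀ i j, 0 ≤ M i j)
    {u v : Fin n → ℝ} (h : u ≤ v) : M *ᵥ u ≤ M *ᵥ v :=
  fun i => dotProduct_le_dotProduct_of_nonneg_left h (hM i)

lemma le_specRad_of_smul_le_mulVec [NeZero n] {B : Matrix (Fin n) (Fin n) ℝ}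
    (hB : ∀ i j, 0 ≤ B i j) {θ : ℝ} {u : Fin n → ℝ} (hu : ∀ j, 0 < u j)
    (h : θ • u ≤ B *ᵥ u) : θ ≤ specRad B := by
  rcases lt_or_ge θ 0 with hθ | hθ
  · exact hθ.le.trans (specRad_nonneg B)
  have hpow : ∀ k : ℕ, θ ^ k • u ≤ B ^ k *ᵥ u := by
    intro k
    induction k with
    | zero => simp
    | succ k ih =>
      calc θ ^ (k + 1) • u = θ • (θ ^ k • u) := by rw [pow_succ', mul_smul]
        _ ≤ θ • (B ^ k *ᵥ u) := smul_le_smul_of_nonneg_left ih hθ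
        _ = B ^ k *ᵥ (θ • u) := (Matrix.mulVec_smul _ _ _).symm
        _ ≤ B ^ k *ᵥ (B *ᵥ u) := mulVec_mono_of_nonneg (Matrix.pow_apply_nonneg hB k) h
        _ = B ^ (k + 1) *ᵥ u := by rw [Matrix.mulVec_mulVec, pow_succ]
  obtain ⟨i, -, hi⟩ := Finset.exists_max_image Finset.univ u Finset.univ_nonempty
  refine le_specRad_of_pow_le_sum hθ fun k => ⟨i, le_of_mul_le_mul_right ?_ (hu i)⟩
  calc θ ^ k * u i ≤ (B ^ k) i ⬝ᵥ u := hpow k i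
    _ ≤ (B ^ k) i ⬝ᵥ fun _ => u i := dotProduct_le_dotProduct_of_nonneg_left
        (fun j => hi j (Finset.mem_univ j)) (Matrix.pow_apply_nonneg hB k i)
    _ = (∑ j, (B ^ k) i j) * u i := by simp [dotProduct, Finset.sum_mul]

lemma exists_specRad_smul_le_mulVec [NeZero n] {B : Matrix (Fin n) (Fin n) ℝ}
    (hB : ∀ i j, 0 ≤ B i j) :
    ∃ u : Fin n → ℝ, 0 < u ∧ specRad B • u ≤ B *ᵥ u := by
  obtain ⟨z, hz, hzρ⟩ := exists_norm_eq_specRad B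
  obtain ⟨v, hv0, hv⟩ := exists_mulVec_eq_smul_of_mem_spectrum hz
  refine ⟨fun j => ‖v j‖, lt_of_le_of_ne (fun j => norm_nonneg _) fun h => hv0 ?_,
    fun j => ?_⟩
  · funext j
    simpa using (congrFun h j).symm
  calc specRad B * ‖v j‖ = ‖(B.map Complex.ofReal *ᵥ v) j‖ := by
        rw [hv, Pi.smul_apply, smul_eq_mul, norm_mul, hzρ]
    _ = ‖∑ l, (B j l : ℂ) * v l‖ := rfl
    _ ≤ ∑ l, ‖(B j l : ℂ) * v l‖ := norm_sum_le _ _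
    _ = (B *ᵥ fun j => ‖v j‖) j := Finset.sum_congr rfl fun l _ => by
        rw [norm_mul, Complex.norm_real, Real.norm_of_nonneg (hB j l)]

lemma IsIrreducibleMatrix.of_smul_one_sub {B : Matrix (Fin n) (Fin n) ℝ} {c : ℝ}
    (h : IsIrreducibleMatrix (c • 1 - B)) : IsIrreducibleMatrix B := fun i j =>
  (h i j).lift' id fun a b hab => by
    by_cases hab' : a = b
    · rw [hab']
    · exact Relation.ReflTransGen.single (by simpa [hab'] using hab)

lemma IsIrreducibleMatrix.forall_of_closed {B : Matrix (Fin n) (Fin n) ℝ}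
    (hirr : IsIrreducibleMatrix B) {p : Fin n → Prop} (hp : ∀ j k, p j → B j k ≠ 0 → p k)
    {i : Fin n} (hi : p i) (j : Fin n) : p j := by
  induction hirr i j with
  | refl => exact hi
  | tail _ hbc ih => exact hp _ _ ih hbc

lemma IsIrreducibleMatrix.exists_ne_zero [Nontrivial (Fin n)] {B : Matrix (Fin n) (Fin n) ℝ}
    (hirr : IsIrreducibleMatrix B) (i : Fin n) : ∃ k, B i k ≠ 0 := by
  obtain ⟨j, hj⟩ := exists_ne i
  rcases (hirr i j).cases_head with h | ⟨k, hk, -⟩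
  · exact absurd h hj.symm
  · exact ⟨k, hk⟩

lemma pow_apply_mul_le_pow_succ_apply {E : Matrix (Fin n) (Fin n) ℝ} (hE : ∀ i j, 0 ≤ E i j)
    (m : ℕ) (i k j : Fin n) : (E ^ m) i k * E k j ≤ (E ^ (m + 1)) i j := by
  rw [pow_succ, Matrix.mul_apply]
  exact Finset.single_le_sum (f := fun l => (E ^ m) i l * E l j)
    (fun l _ => mul_nonneg (Matrix.pow_apply_nonneg hE m i l) (hE l j)) (Finset.mem_univ k)

lemma IsIrreducibleMatrix.exists_pow_one_add_pos {B : Matrix (Fin n) (Fin n) ℝ}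
    (hB : ∀ i j, 0 ≤ B i j) (hirr : IsIrreducibleMatrix B) :
    ∃ m : ℕ, ∀ i j, 0 < ((1 + B) ^ m) i j := by
  have hle : ∀ i j, B i j ≤ (1 + B) i j := fun i j => by
    rw [Matrix.add_apply, Matrix.one_apply]
    split_ifs <;> linarith
  have hE : ∀ i j, 0 ≤ (1 + B) i j := fun i j => (hB i j).trans (hle i j)
  have hstep : ∀ (m : ℕ) (i k j : Fin n), 0 < ((1 + B) ^ m) i k → 0 < (1 + B) k j →
      0 < ((1 + B) ^ (m + 1)) i j := fun m i k j h₁ h₂ =>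
    (mul_pos h₁ h₂).trans_le (pow_apply_mul_le_pow_succ_apply hE m i k j)
  have hev : ∀ i j, ∀ᶠ m : ℕ in atTop, 0 < ((1 + B) ^ m) i j := by
    intro i j
    obtain ⟨m₀, hm₀⟩ : ∃ m : ℕ, 0 < ((1 + B) ^ m) i j := by
      induction hirr i j with
      | refl => exact ⟨0, by simp⟩
      | tail _ hbc ih =>
        obtain ⟨m, hm⟩ := ih
        exact ⟨m + 1, hstep _ _ _ _ hm (((hB _ _).lt_of_ne' hbc).trans_le (hle _ _))⟩
    filter_upwards [eventually_ge_atTop m₀] with m hm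
    induction m, hm using Nat.le_induction with
    | base => exact hm₀
    | succ m _ ih =>
      exact hstep _ _ _ _ ih (by rw [Matrix.add_apply, Matrix.one_apply_eq]; linarith [hB j j])
  exact (eventually_all.2 fun i => eventually_all.2 (hev i)).exists

lemma mulVec_pos_of_pos {P : Matrix (Fin n) (Fin n) ℝ} (hP : ∀ i j, 0 < P i j)
    {v : Fin n → ℝ} (hv : 0 < v) (i : Fin n) : 0 < (P *ᵥ v) i := by
  obtain ⟨hv0, j, hj⟩ := Pi.lt_def.1 hv
  exact Finset.sum_pos' (fun k _ => mul_nonneg (hP i k).le (hv0 k))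
    ⟨j, Finset.mem_univ j, mul_pos (hP i j) hj⟩

lemma exists_pos_smul_le {ι : Type*} [Finite ι] (u : ι → ℝ) {d : ι → ℝ}
    (hd : ∀ j, 0 < d j) : ∃ ε : ℝ, 0 < ε ∧ ε • u ≤ d := by
  have h : ∀ᶠ ε in 𝓝 (0 : ℝ), ∀ j, ε * u j < d j := eventually_all.2 fun j =>
    ((continuous_id.mul continuous_const).tendsto' 0 0 (zero_mul _)).eventually
      (gt_mem_nhds (hd j))
  have h' : ∀ᶠ ε in 𝓝[>] (0 : ℝ), ∀ j, ε * u j < d j := nhdsWithin_le_nhds h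
  obtain ⟨ε, hε, hpos⟩ := (h'.and self_mem_nhdsWithin).exists
  exact ⟨ε, hpos, fun j => (hε j).le⟩

theorem exists_pos_mulVec_eq_specRad_smul [NeZero n] {B : Matrix (Fin n) (Fin n) ℝ}
    (hB : ∀ i j, 0 ≤ B i j) (hirr : IsIrreducibleMatrix B) :
    ∃ w : Fin n → ℝ, (∀ j, 0 < w j) ∧ B *ᵥ w = specRad B • w := by
  obtain ⟨u, hu, hρu⟩ := exists_specRad_smul_le_mulVec hB
  obtain ⟨m, hP⟩ := hirr.exists_pow_one_add_pos hB
  set P := (1 + B) ^ m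
  set d := B *ᵥ u - specRad B • u
  have hBP : B *ᵥ (P *ᵥ u) = specRad B • (P *ᵥ u) + P *ᵥ d := by
    have hcomm : B * P = P * B :=
      (((Commute.one_right B).add_right (Commute.refl B)).pow_right m).eq
    rw [Matrix.mulVec_mulVec, hcomm, ← Matrix.mulVec_mulVec, Matrix.mulVec_sub,
      Matrix.mulVec_smul, add_sub_cancel]
  have hw := mulVec_pos_of_pos hP hu
  refine ⟨P *ᵥ u, hw, ?_⟩
  suffices hd : d = 0 by rw [hBP, hd, Matrix.mulVec_zero, add_zero]
  by_contra hd
  -- Otherwise `P *ᵥ u` would be subinvariant for a value beyond the spectral radius.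
  obtain ⟨ε, hε, hεd⟩ := exists_pos_smul_le (P *ᵥ u)
    (mulVec_pos_of_pos hP (lt_of_le_of_ne (sub_nonneg.2 hρu) (Ne.symm hd)))
  have := le_specRad_of_smul_le_mulVec hB hw (θ := specRad B + ε)
    (by rw [hBP, add_smul]; gcongr)
  linarith

lemma mulVec_apply_eq_zero_iff {M : Matrix (Fin n) (Fin n) ℝ} {v : Fin n → ℝ} {j : Fin n}
    (hM : ∀ k, 0 ≤ M j k) (hv : 0 ≤ v) :
    (M *ᵥ v) j = 0 ↔ ∀ k, M j k = 0 ∨ v k = 0 := by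
  show ∑ k, M j k * v k = 0 ↔ _
  simpa using Finset.sum_eq_zero_iff_of_nonneg (s := Finset.univ) fun k _ =>
    mul_nonneg (hM k) (hv k)

lemma isZMatrix_smul_one_sub {P : Matrix (Fin n) (Fin n) ℝ} (hP : ∀ j k, 0 ≤ P j k)
    (c : ℝ) : IsZMatrix (c • 1 - P) := fun j k hjk => by
  simpa [Matrix.one_apply_ne hjk] using hP j k

lemma IsZMatrix.vecMul_apply_nonpos {A : Matrix (Fin n) (Fin n) ℝ} (hA : IsZMatrix A)
    {x : Fin n → ℝ} (hx : 0 ≤ x) {k : Fin n} (hk : x k = 0) : (x ᵥ* A) k ≤ 0 := by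
  show ∑ j, x j * A j k ≤ 0
  refine Finset.sum_nonpos fun j _ => ?_
  by_cases hjk : j = k
  · simp [hjk, hk]
  · exact mul_nonpos_of_nonneg_of_nonpos (hx j) (hA j k hjk)

lemma IsZMatrix.mulVec_apply_nonpos {A : Matrix (Fin n) (Fin n) ℝ} (hA : IsZMatrix A)
    {y : Fin n → ℝ} (hy : 0 ≤ y) {k : Fin n} (hk : y k = 0) : (A *ᵥ y) k ≤ 0 := by
  show ∑ j, A k j * y j ≤ 0
  refine Finset.sum_nonpos fun j _ => ?_
  by_cases hjk : k = j
  · simp [← hjk, hk]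
  · exact mul_nonpos_of_nonpos_of_nonneg (hA k j hjk) (hy j)

-- Collatz's monotone matrices; equivalently, `M` is invertible with `M⁻¹ ≥ 0`.
def IsMonotoneMatrix (M : Matrix (Fin n) (Fin n) ℝ) : Prop :=
  ∀ v : Fin n → ℝ, 0 ≤ M *ᵥ v → 0 ≤ v

namespace IsMonotoneMatrix

variable {M : Matrix (Fin n) (Fin n) ℝ}

lemma isUnit_det (hM : IsMonotoneMatrix M) : IsUnit M.det := by
  rw [isUnit_iff_ne_zero]
  intro hdet
  obtain ⟨v, hv0, hv⟩ := Matrix.exists_mulVec_eq_zero_iff.2 hdet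
  refine hv0 (le_antisymm ?_ (hM v hv.ge))
  simpa using hM (-v) (by rw [Matrix.mulVec_neg, hv, neg_zero])

lemma inv_apply_nonneg (hM : IsMonotoneMatrix M) (j k : Fin n) : 0 ≤ M⁻¹ j k := by
  have := hM (M⁻¹ *ᵥ Pi.single k 1) (by
    rw [Matrix.mulVec_mulVec, Matrix.mul_nonsing_inv _ hM.isUnit_det, Matrix.one_mulVec]
    exact Pi.single_nonneg.2 zero_le_one)
  simpa using this j

lemma inv_apply_self_pos (hM : IsMonotoneMatrix M) (hZ : IsZMatrix M) (j : Fin n) :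
    0 < M⁻¹ j j := by
  have h₁ : ∑ k, M j k * M⁻¹ k j = 1 := by
    rw [← Matrix.mul_apply, Matrix.mul_nonsing_inv _ hM.isUnit_det, Matrix.one_apply_eq]
  have h₂ : ∑ k, M j k * M⁻¹ k j ≤ M j j * M⁻¹ j j := by
    rw [← Finset.add_sum_erase _ _ (Finset.mem_univ j)]
    exact add_le_of_nonpos_right (Finset.sum_nonpos fun k hk => mul_nonpos_of_nonpos_of_nonneg
      (hZ j k (Finset.ne_of_mem_erase hk).symm) (hM.inv_apply_nonneg k j))
  refine (hM.inv_apply_nonneg j j).lt_of_ne fun h => ?_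
  rw [← h, mul_zero] at h₂
  linarith

lemma nonneg_and_pos_of_vecMul_eq_single (hM : IsMonotoneMatrix M) (hZ : IsZMatrix M)
    {x : Fin n → ℝ} {i : Fin n} (h : x ᵥ* M = Pi.single i 1) : 0 ≤ x ∧ 0 < x i := by
  have hx : x = M⁻¹ i := by
    rw [← Matrix.vecMul_one x, ← Matrix.mul_nonsing_inv _ hM.isUnit_det,
      ← Matrix.vecMul_vecMul, h, Matrix.single_one_vecMul]
    rfl
  exact hx ▸ ⟨hM.inv_apply_nonneg i, hM.inv_apply_self_pos hZ i⟩

lemma nonneg_and_pos_of_mulVec_eq_single (hM : IsMonotoneMatrix M) (hZ : IsZMatrix M)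
    {y : Fin n → ℝ} {i : Fin n} (h : M *ᵥ y = Pi.single i 1) : 0 ≤ y ∧ 0 < y i := by
  have hy : y = fun k => M⁻¹ k i := by
    rw [← Matrix.one_mulVec y, ← Matrix.nonsing_inv_mul _ hM.isUnit_det,
      ← Matrix.mulVec_mulVec, h, Matrix.mulVec_single_one]
    rfl
  exact hy ▸ ⟨fun k => hM.inv_apply_nonneg k i, hM.inv_apply_self_pos hZ i⟩

end IsMonotoneMatrix

lemma row_eq_of_smul_one_sub_mulVec_nonneg {B P : Matrix (Fin n) (Fin n) ℝ}
    (hP : ∀ j k, 0 ≤ P j k) (hPB : ∀ j k, P j k ≤ B j k) {c : ℝ} {w : Fin n → ℝ}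
    (hw : ∀ j, 0 < w j) (hBw : B *ᵥ w = c • w) {z : Fin n → ℝ} (hz : 0 ≤ z) {m : ℝ}
    (hm : 0 < m) (hv : 0 ≤ (c • 1 - P) *ᵥ (z - m • w)) {j : Fin n} (hj : z j = 0)
    (k : Fin n) : P j k = B j k ∧ (P j k = 0 ∨ z k = 0) := by
  have hBP : ∀ j k, 0 ≤ (B - P) j k := fun j k => sub_nonneg.2 (hPB j k)
  have hMv : (c • 1 - P) *ᵥ (z - m • w) = c • z - P *ᵥ z - m • ((B - P) *ᵥ w) := by
    rw [Matrix.sub_mulVec, Matrix.sub_mulVec, Matrix.smul_mulVec, Matrix.one_mulVec,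
      Matrix.mulVec_sub, Matrix.mulVec_smul, hBw]
    module
  have h₁ : 0 ≤ (P *ᵥ z) j := dotProduct_nonneg_of_nonneg (hP j) hz
  have h₂ : 0 ≤ ((B - P) *ᵥ w) j := dotProduct_nonneg_of_nonneg (hBP j) fun k => (hw k).le
  have h₃ := hv j
  simp only [hMv, Pi.sub_apply, Pi.smul_apply, smul_eq_mul, Pi.zero_apply, hj] at h₃
  have hPz : (P *ᵥ z) j = 0 := by nlinarith
  have hBPw : ((B - P) *ᵥ w) j = 0 := by nlinarith
  refine ⟨?_, (mulVec_apply_eq_zero_iff (hP j) hz).1 hPz k⟩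
  have := ((mulVec_apply_eq_zero_iff (hBP j) fun k => (hw k).le).1 hBPw k).resolve_right
    (hw k).ne'
  rw [Matrix.sub_apply, sub_eq_zero] at this
  exact this.symm

theorem isMonotoneMatrix_smul_one_sub {B P : Matrix (Fin n) (Fin n) ℝ}
    (hP : ∀ j k, 0 ≤ P j k) (hPB : ∀ j k, P j k ≤ B j k) (hne : P ≠ B)
    (hirr : IsIrreducibleMatrix B) {c : ℝ} {w : Fin n → ℝ} (hw : ∀ j, 0 < w j)
    (hBw : B *ᵥ w = c • w) : IsMonotoneMatrix (c • 1 - P) := by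
  intro v hv
  by_contra hneg
  obtain ⟨j₀, hj₀⟩ : ∃ j, v j < 0 := by simpa [Pi.le_def] using hneg
  have : Nonempty (Fin n) := ⟨j₀⟩
  -- Shift `v` by the least multiple of `w` that makes it nonnegative.
  obtain ⟨j₁, -, hj₁⟩ := Finset.exists_mem_eq_sup' Finset.univ_nonempty fun j => -v j / w j
  set m := Finset.univ.sup' Finset.univ_nonempty fun j => -v j / w j
  have hle : ∀ j, -v j ≤ m * w j := fun j =>
    (div_le_iff₀ (hw j)).1 (Finset.le_sup' (fun j => -v j / w j) (Finset.mem_univ j))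
  have hm : 0 < m := (div_pos (neg_pos.2 hj₀) (hw j₀)).trans_le
    (Finset.le_sup' (fun j => -v j / w j) (Finset.mem_univ j₀))
  set z := v + m • w
  have hz : 0 ≤ z := fun j => by
    simp only [z, Pi.add_apply, Pi.smul_apply, smul_eq_mul, Pi.zero_apply]
    linarith [hle j]
  have hz₁ : z j₁ = 0 := by
    simp only [z, Pi.add_apply, Pi.smul_apply, smul_eq_mul, hj₁]
    field_simp [(hw j₁).ne']
    ring
  have hv' : 0 ≤ (c • 1 - P) *ᵥ (z - m • w) := by rwa [add_sub_cancel_right]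
  have hrow (j k : Fin n) (hj : z j = 0) :=
    row_eq_of_smul_one_sub_mulVec_nonneg hP hPB hw hBw hz hm hv' hj k
  have hzall : ∀ j, z j = 0 := hirr.forall_of_closed (fun j k hj hjk => by
    obtain ⟨hPjk, h⟩ := hrow j k hj
    exact h.resolve_left (hPjk ▸ hjk)) hz₁
  exact hne (Matrix.ext fun j k => (hrow j k (hzall j)).1)

-- `c • 1 - principalBlock B S` stands for the principal submatrix of `c • 1 - B` on `S`,
-- padded by `c • 1` outside `S × S` so that it keeps the index type `Fin n`.
open Classical in
noncomputable def principalBlock (B : Matrix (Fin n) (Fin n) ℝ) (S : Set (Fin n)) :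
    Matrix (Fin n) (Fin n) ℝ :=
  Matrix.of fun j k => if j ∈ S ∧ k ∈ S then B j k else 0

section principalBlock

variable {B : Matrix (Fin n) (Fin n) ℝ} {S : Set (Fin n)} {c : ℝ}

lemma principalBlock_apply_of_mem {j k : Fin n} (hj : j ∈ S) (hk : k ∈ S) :
    principalBlock B S j k = B j k := by
  simp [principalBlock, hj, hk]

lemma principalBlock_apply_of_notMem_left {j : Fin n} (hj : j ∉ S) (k : Fin n) :
    principalBlock B S j k = 0 := by
  simp [principalBlock, hj]

lemma principalBlock_apply_of_notMem_right (j : Fin n) {k : Fin n} (hk : k ∉ S) :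
    principalBlock B S j k = 0 := by
  simp [principalBlock, hk]

lemma principalBlock_diff_singleton_apply {i s k : Fin n} (hs : s ≠ i) (hk : k ≠ i) :
    principalBlock B (S \ {i}) s k = principalBlock B S s k := by
  by_cases h : s ∈ S ∧ k ∈ S
  · rw [principalBlock_apply_of_mem (S := S \ {i}) ⟨h.1, hs⟩ ⟨h.2, hk⟩,
      principalBlock_apply_of_mem h.1 h.2]
  · simp only [principalBlock, Matrix.of_apply, if_neg h]
    exact if_neg fun h' => h ⟨h'.1.1, h'.2.1⟩

lemma principalBlock_nonneg (hB : ∀ j k, 0 ≤ B j k) (j k : Fin n) :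
    0 ≤ principalBlock B S j k := by
  by_cases h : j ∈ S ∧ k ∈ S <;> simp [principalBlock, h, hB]

lemma principalBlock_le (hB : ∀ j k, 0 ≤ B j k) (j k : Fin n) :
    principalBlock B S j k ≤ B j k := by
  by_cases h : j ∈ S ∧ k ∈ S <;> simp [principalBlock, h, hB]

lemma principalBlock_ne [Nontrivial (Fin n)] (hirr : IsIrreducibleMatrix B) {t : Fin n}
    (ht : t ∉ S) : principalBlock B S ≠ B := fun h => by
  obtain ⟨k, hk⟩ := hirr.exists_ne_zero t
  rw [← h] at hk
  exact hk (principalBlock_apply_of_notMem_left ht k)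

lemma isMonotoneMatrix_smul_one_sub_principalBlock [Nontrivial (Fin n)]
    (hB : ∀ j k, 0 ≤ B j k) (hirr : IsIrreducibleMatrix B) {w : Fin n → ℝ}
    (hw : ∀ j, 0 < w j) (hBw : B *ᵥ w = c • w) {t : Fin n} (ht : t ∉ S) :
    IsMonotoneMatrix (c • 1 - principalBlock B S) :=
  isMonotoneMatrix_smul_one_sub (principalBlock_nonneg hB) (principalBlock_le hB)
    (principalBlock_ne hirr ht) hirr hw hBw

lemma vecMul_smul_one_sub_principalBlock {x : Fin n → ℝ} (hx : ∀ k ∉ S, x k = 0) :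
    x ᵥ* (c • 1 - principalBlock B S) = S.indicator (x ᵥ* (c • 1 - B)) := by
  ext k
  by_cases hk : k ∈ S
  · simp only [Set.indicator_of_mem hk, Matrix.vecMul, dotProduct, principalBlock,
      Matrix.sub_apply, Matrix.smul_apply, Matrix.of_apply, hk, and_true]
    refine Finset.sum_congr rfl fun j _ => ?_
    by_cases hj : j ∈ S
    · simp [hj, hk]
    · simp [hx j hj]
  · simp [Matrix.vecMul, dotProduct, principalBlock, hk, Matrix.one_apply, hx k hk]

lemma smul_one_sub_principalBlock_mulVec {y : Fin n → ℝ} (hy : ∀ k ∉ S, y k = 0) :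
    (c • 1 - principalBlock B S) *ᵥ y = S.indicator ((c • 1 - B) *ᵥ y) := by
  ext k
  by_cases hk : k ∈ S
  · simp only [Set.indicator_of_mem hk, Matrix.mulVec, dotProduct, principalBlock,
      Matrix.sub_apply, Matrix.smul_apply, Matrix.of_apply, hk, true_and]
    refine Finset.sum_congr rfl fun j _ => ?_
    by_cases hj : j ∈ S
    · simp [hj, hk]
    · simp [hy j hj]
  · simp [Matrix.mulVec, dotProduct, principalBlock, hk, Matrix.one_apply, hy k hk]

end principalBlock

lemma smul_row_sub_smul_row_eq {M M' K K' : Matrix (Fin n) (Fin n) ℝ} {i l : Fin n}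
    (hK : K * M = 1) (hK' : M' * K' = 1) (hagree : ∀ s k, s ≠ i → k ≠ i → M' s k = M s k)
    (hcol : ∀ s, s ≠ i → M' s i = 0) (hl : l ≠ i) :
    K i i • K l - K l i • K i = K i i • K' l := by
  set r := K i i • K l - K l i • K i
  have hri : r i = 0 := by simp only [r, Pi.sub_apply, Pi.smul_apply, smul_eq_mul]; ring
  have hrowK : ∀ j, K j ᵥ* M = Pi.single j 1 := fun j => by
    ext k
    rw [← Matrix.one_eq_pi_single, ← hK]
    rfl
  have hrM : r ᵥ* M' = K i i • Pi.single l 1 := by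
    ext k
    by_cases hk : k = i
    · subst hk
      rw [Matrix.vecMul, dotProduct,
        Finset.sum_eq_single k (fun s _ hs => by rw [hcol s hs, mul_zero]) (by simp), hri,
        zero_mul]
      simp [hl]
    · have : (r ᵥ* M') k = (r ᵥ* M) k := by
        simp only [Matrix.vecMul, dotProduct]
        refine Finset.sum_congr rfl fun s _ => ?_
        by_cases hs : s = i
        · simp [hs, hri]
        · rw [hagree s k hs hk]
      rw [this, Matrix.sub_vecMul, Matrix.smul_vecMul, Matrix.smul_vecMul, hrowK, hrowK]
      simp [Pi.single_apply, Ne.symm hk]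
  calc r = r ᵥ* M' ᵥ* K' := by rw [Matrix.vecMul_vecMul, hK', Matrix.vecMul_one]
    _ = K i i • K' l := by rw [hrM, Matrix.smul_vecMul, Matrix.single_one_vecMul]; rfl

lemma IsMonotoneMatrix.inv_apply_mul_inv_apply_le {M M' : Matrix (Fin n) (Fin n) ℝ}
    (hM : IsMonotoneMatrix M) (hM' : IsMonotoneMatrix M') {i : Fin n}
    (hagree : ∀ s k, s ≠ i → k ≠ i → M' s k = M s k)
    (hcol : ∀ s, s ≠ i → M' s i = 0) (l k : Fin n) :
    M⁻¹ l i * M⁻¹ i k ≤ M⁻¹ i i * M⁻¹ l k := by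
  by_cases hl : l = i
  · rw [hl, mul_comm]
  have := congrFun (smul_row_sub_smul_row_eq (Matrix.nonsing_inv_mul _ hM.isUnit_det)
    (Matrix.mul_nonsing_inv _ hM'.isUnit_det) hagree hcol hl) k
  simp only [Pi.sub_apply, Pi.smul_apply, smul_eq_mul] at this
  nlinarith [mul_nonneg (hM.inv_apply_nonneg i i) (hM'.inv_apply_nonneg l k)]

lemma vecMul_apply_mul_mulVec_apply_le {K : Matrix (Fin n) (Fin n) ℝ} {i : Fin n}
    (hK : ∀ l k, K l i * K i k ≤ K i i * K l k) {a b : Fin n → ℝ}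
    (ha : ∀ l, l ≠ i → a l ≤ 0) (hb : ∀ k, k ≠ i → b k ≤ 0) :
    (a ᵥ* K) i * (K *ᵥ b) i ≤ K i i * (a ⬝ᵥ K *ᵥ b) := by
  have hexp : K i i * (a ⬝ᵥ K *ᵥ b) - (a ᵥ* K) i * (K *ᵥ b) i =
      ∑ l, ∑ k, a l * b k * (K i i * K l k - K l i * K i k) := by
    have e₁ : K i i * (a ⬝ᵥ K *ᵥ b) = ∑ l, ∑ k, K i i * (a l * (K l k * b k)) := by
      simp only [dotProduct, Matrix.mulVec, Finset.mul_sum]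
    have e₂ : (a ᵥ* K) i * (K *ᵥ b) i = ∑ l, ∑ k, a l * K l i * (K i k * b k) := by
      simp only [Matrix.vecMul, Matrix.mulVec, dotProduct, Finset.sum_mul_sum]
    rw [e₁, e₂, ← Finset.sum_sub_distrib]
    refine Finset.sum_congr rfl fun l _ => ?_
    rw [← Finset.sum_sub_distrib]
    exact Finset.sum_congr rfl fun k _ => by ring
  have hterm : ∀ l k, 0 ≤ a l * b k * (K i i * K l k - K l i * K i k) := fun l k => by
    by_cases hl : l = i
    · simp [hl]
    by_cases hk : k = i
    · simp [hk, mul_comm]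
    exact mul_nonneg (mul_nonneg_of_nonpos_of_nonpos (ha l hl) (hb k hk)) (sub_nonneg.2 (hK l k))
  linarith [Finset.sum_nonneg fun l (_ : l ∈ Finset.univ) =>
    Finset.sum_nonneg fun k (_ : k ∈ Finset.univ) => hterm l k]

lemma mul_le_inv_apply_mul_vecMul_dotProduct {M : Matrix (Fin n) (Fin n) ℝ}
    (hM : IsUnit M.det) {i : Fin n}
    (hK : ∀ l k, M⁻¹ l i * M⁻¹ i k ≤ M⁻¹ i i * M⁻¹ l k) {x y : Fin n → ℝ}
    (hx : ∀ l, l ≠ i → (x ᵥ* M) l ≤ 0) (hy : ∀ k, k ≠ i → (M *ᵥ y) k ≤ 0) :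
    x i * y i ≤ M⁻¹ i i * ((x ᵥ* M) ⬝ᵥ y) := by
  have := vecMul_apply_mul_mulVec_apply_le hK hx hy
  rwa [Matrix.vecMul_vecMul, Matrix.mul_nonsing_inv _ hM, Matrix.vecMul_one, Matrix.mulVec_mulVec,
    Matrix.nonsing_inv_mul _ hM, Matrix.one_mulVec] at this

lemma inv_apply_mul_inv_apply_le_of_principalBlock {B : Matrix (Fin n) (Fin n) ℝ} {c : ℝ}
    {S : Set (Fin n)} {i : Fin n} (hM : IsMonotoneMatrix (c • 1 - principalBlock B S))
    (hM' : IsMonotoneMatrix (c • 1 - principalBlock B (S \ {i}))) (l k : Fin n) :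
    (c • 1 - principalBlock B S)⁻¹ l i * (c • 1 - principalBlock B S)⁻¹ i k ≤
      (c • 1 - principalBlock B S)⁻¹ i i * (c • 1 - principalBlock B S)⁻¹ l k :=
  hM.inv_apply_mul_inv_apply_le hM'
    (fun s k hs hk => by simp only [Matrix.sub_apply, principalBlock_diff_singleton_apply hs hk])
    (fun s hs => by
      simp [Matrix.one_apply_ne hs, principalBlock_apply_of_notMem_right s (S := S \ {i})])
    l k

lemma indicator_dotProduct {R : Set (Fin n)} {f y : Fin n → ℝ} (hy : ∀ k ∉ R, y k = 0) :
    R.indicator f ⬝ᵥ y = f ⬝ᵥ y :=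
  Finset.sum_congr rfl fun k _ => by by_cases hk : k ∈ R <;> simp [hk, hy]

lemma exists_notMem_patterns {SL SU : Set (Fin n × Fin n)}
    (hSL1 : SL ⊆ {p : Fin n × Fin n | p.2 ≤ p.1})
    (hSU1 : SU ⊆ {p : Fin n × Fin n | p.1 ≤ p.2})
    {l s : Fin n} (hl : ∀ j, j ≤ l) (hSL3 : (l, s) ∉ SL) (hSU3 : (s, l) ∉ SU) (i : Fin n) :
    ∃ t, (i, t) ∉ SL ∧ (t, i) ∉ SU := by
  by_cases hi : i = l
  · exact hi ▸ ⟨s, hSL3, hSU3⟩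
  · have hlt : i < l := lt_of_le_of_ne (hl i) hi
    exact ⟨l, fun h => (hSL1 h).not_gt hlt, fun h => (hSU1 h).not_gt hlt⟩

namespace IsFSAILowerFactor

variable {A B L : Matrix (Fin n) (Fin n) ℝ} {S : Set (Fin n × Fin n)} {c : ℝ} {i : Fin n}

lemma vecMul_apply_nonpos (hL : IsFSAILowerFactor A L S) (hA : IsZMatrix A) (hx : 0 ≤ L i)
    {k : Fin n} (hk : k ≠ i) : (L i ᵥ* A) k ≤ 0 := by
  by_cases hik : (i, k) ∈ S
  · exact (hL.2.2 _ hik).trans_le (by simp [Ne.symm hk])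
  · exact hA.vecMul_apply_nonpos hx (hL.2.1 _ hik)

lemma vecMul_principalBlock (hL : IsFSAILowerFactor (c • 1 - B) L S) {R : Set (Fin n)}
    (hR : {k | (i, k) ∈ S} ⊆ R) :
    L i ᵥ* (c • 1 - principalBlock B R) = R.indicator (L i ᵥ* (c • 1 - B)) :=
  vecMul_smul_one_sub_principalBlock fun k hk => hL.2.1 (i, k) fun h => hk (hR h)

lemma vecMul_principalBlock_eq_single (hL : IsFSAILowerFactor (c • 1 - B) L S)
    (hii : (i, i) ∈ S) :
    L i ᵥ* (c • 1 - principalBlock B {k | (i, k) ∈ S}) = Pi.single i 1 := by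
  rw [hL.vecMul_principalBlock subset_rfl]
  ext k
  by_cases hk : (i, k) ∈ S
  · rw [Set.indicator_of_mem (s := {k | (i, k) ∈ S}) hk]
    exact (hL.2.2 _ hk).trans (by simp [Pi.single_apply, eq_comm])
  · rw [Set.indicator_of_notMem (s := {k | (i, k) ∈ S}) hk, Pi.single_apply,
      if_neg (by rintro rfl; exact hk hii)]

end IsFSAILowerFactor

namespace IsFSAIUpperFactor

variable {A B U : Matrix (Fin n) (Fin n) ℝ} {S : Set (Fin n × Fin n)} {c : ℝ} {i : Fin n}

lemma mulVec_apply_nonpos (hU : IsFSAIUpperFactor A U S) (hA : IsZMatrix A) (hy : 0 ≤ Uᵀ i)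
    {k : Fin n} (hk : k ≠ i) : (A *ᵥ Uᵀ i) k ≤ 0 := by
  by_cases hki : (k, i) ∈ S
  · exact (hU.2.2 _ hki).trans_le (by simp [hk])
  · exact hA.mulVec_apply_nonpos hy (hU.2.1 _ hki)

lemma principalBlock_mulVec (hU : IsFSAIUpperFactor (c • 1 - B) U S) {R : Set (Fin n)}
    (hR : {k | (k, i) ∈ S} ⊆ R) :
    (c • 1 - principalBlock B R) *ᵥ Uᵀ i = R.indicator ((c • 1 - B) *ᵥ Uᵀ i) :=
  smul_one_sub_principalBlock_mulVec fun k hk => hU.2.1 (k, i) fun h => hk (hR h)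

lemma principalBlock_mulVec_eq_single (hU : IsFSAIUpperFactor (c • 1 - B) U S)
    (hii : (i, i) ∈ S) :
    (c • 1 - principalBlock B {k | (k, i) ∈ S}) *ᵥ Uᵀ i = Pi.single i 1 := by
  rw [hU.principalBlock_mulVec subset_rfl]
  ext k
  by_cases hk : (k, i) ∈ S
  · rw [Set.indicator_of_mem (s := {k | (k, i) ∈ S}) hk]
    exact (hU.2.2 _ hk).trans (by simp [Pi.single_apply])
  · rw [Set.indicator_of_notMem (s := {k | (k, i) ∈ S}) hk, Pi.single_apply,
      if_neg (by rintro rfl; exact hk hii)]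

end IsFSAIUpperFactor

theorem fsai_LAU_pos_diagonal (n : ℕ) (hn : 2 ≤ n)
    (A : Matrix (Fin n) (Fin n) ℝ)
    (hA : IsSingularMMatrix A) (hirr : IsIrreducibleMatrix A)
    (SL SU : Set (Fin n × Fin n))
    (hSL1 : SL ⊆ {p : Fin n × Fin n | p.2 ≤ p.1})
    (hSL2 : ∀ i : Fin n, (i, i) ∈ SL)
    (hSL3 : ((⟨n - 1, by omega⟩ : Fin n), (⟨n - 2, by omega⟩ : Fin n)) ∉ SL)
    (hSU1 : SU ⊆ {p : Fin n × Fin n | p.1 ≤ p.2})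
    (hSU2 : ∀ i : Fin n, (i, i) ∈ SU)
    (hSU3 : ((⟨n - 2, by omega⟩ : Fin n), (⟨n - 1, by omega⟩ : Fin n)) ∉ SU)
    (L U : Matrix (Fin n) (Fin n) ℝ)
    (hL : IsFSAILowerFactor A L SL) (hU : IsFSAIUpperFactor A U SU) :
    ∀ i, 0 < (L * A * U) i i := by
  obtain ⟨hZ, B, hB, rfl⟩ := hA
  have : Nontrivial (Fin n) := Fin.nontrivial_iff_two_le.2 hn
  have : NeZero n := ⟨by omega⟩
  have hirrB := hirr.of_smul_one_sub
  obtain ⟨w, hw, hBw⟩ := exists_pos_mulVec_eq_specRad_smul hB hirrB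
  have hmono {S : Set (Fin n)} {t : Fin n} (ht : t ∉ S) :=
    isMonotoneMatrix_smul_one_sub_principalBlock hB hirrB hw hBw ht
  have hZS (S : Set (Fin n)) :=
    isZMatrix_smul_one_sub (principalBlock_nonneg hB (S := S)) (specRad B)
  intro i
  set P : Set (Fin n) := {k | (i, k) ∈ SL}
  set Q : Set (Fin n) := {k | (k, i) ∈ SU}
  obtain ⟨t, htP, htQ⟩ := exists_notMem_patterns hSL1 hSU1
    (fun j => Nat.le_sub_one_of_lt j.isLt) hSL3 hSU3 i
  have htR : t ∉ P ∪ Q := fun h => h.elim htP htQ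
  obtain ⟨hx, hxi⟩ := (hmono htP).nonneg_and_pos_of_vecMul_eq_single (hZS P)
    (hL.vecMul_principalBlock_eq_single (hSL2 i))
  obtain ⟨hy, hyi⟩ := (hmono htQ).nonneg_and_pos_of_mulVec_eq_single (hZS Q)
    (hU.principalBlock_mulVec_eq_single (hSU2 i))
  have hLR := hL.vecMul_principalBlock (B := B) (R := P ∪ Q) Set.subset_union_left
  have hUR := hU.principalBlock_mulVec (B := B) (R := P ∪ Q) Set.subset_union_right
  have key := mul_le_inv_apply_mul_vecMul_dotProduct (hmono htR).isUnit_det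
    (inv_apply_mul_inv_apply_le_of_principalBlock (hmono htR) (hmono fun h => htR h.1))
    (fun l hl => hLR ▸ Set.indicator_apply_nonpos fun _ => hL.vecMul_apply_nonpos hZ hx hl)
    (fun k hk => hUR ▸ Set.indicator_apply_nonpos fun _ => hU.mulVec_apply_nonpos hZ hy hk)
  rw [hLR, indicator_dotProduct (R := P ∪ Q) (y := Uᵀ i)
    fun k hk => hU.2.1 (k, i) fun h => hk (Or.inr h)] at key
  exact pos_of_mul_pos_right ((mul_pos hxi hyi).trans_le key) ((hmono htR).inv_apply_nonneg i i)
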